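/- In the extension L' = L ⊔ (T × ℤ) of the previous construction, suppose φ is an automorphism of (L, <) and σ is an automorphism of (T, ≺) such that a_{σ(τ)} = φ(a_τ) for all τ. Then the map φ' defined by φ' = φ on L and φ'(τ, m) = (σ(τ), m + 1) is an automorphism of (L', <), it extends φ, and its fixed points are exactly the fixed points of φ in L. -/
import Mathlib


/-- The order on `L ⊔ (T × ℤ)` where the new point `(τ, m)` sits immediately above
`a τ`, with ties broken first by `≺` on `T`, then by the usual order of `ℤ`. -/
def bigExtLt {L T : Type*} [LinearOrder L] [LinearOrder T] (a : T → L) :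
    L ⊕ (T × ℤ) → L ⊕ (T × ℤ) → Prop
  | Sum.inl b, Sum.inl c => b < c
  | Sum.inl b, Sum.inr p => b ≤ a p.1
  | Sum.inr p, Sum.inl b => a p.1 < b
  | Sum.inr p, Sum.inr q =>
      a p.1 < a q.1 ∨ (a p.1 = a q.1 ∧ p.1 < q.1) ∨ (p.1 = q.1 ∧ p.2 < q.2)

/-- The extended map: `φ` on `L` and `(τ, m) ↦ (σ τ, m + 1)` on new points. -/
def bigExtMap {L T : Type*} (φ : L → L) (σ : T → T) :
    L ⊕ (T × ℤ) → L ⊕ (T × ℤ)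
  | Sum.inl b => Sum.inl (φ b)
  | Sum.inr p => Sum.inr (σ p.1, p.2 + 1)

/-- If `φ ∈ Aut(L)`, `σ ∈ Aut(T)` and `a (σ τ) = φ (a τ)`, then the map acting as
`φ` on `L` and as `(τ, m) ↦ (σ τ, m + 1)` on new points is an automorphism of the
extension, extends `φ`, and its fixed points are exactly the fixed points of `φ`
in `L`. -/
theorem bigExt_automorphism {L T : Type*} [LinearOrder L] [LinearOrder T]
    (a : T → L) (φ : L ≃o L) (σ : T ≃o T) (ha : ∀ τ, a (σ τ) = φ (a τ)) :
    Function.Bijective (bigExtMap (L := L) (T := T) φ σ) ∧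
    (∀ p q : L ⊕ (T × ℤ),
        bigExtLt a p q ↔ bigExtLt a (bigExtMap φ σ p) (bigExtMap φ σ q)) ∧
    (∀ b : L, bigExtMap φ σ (Sum.inl b) = Sum.inl (φ b)) ∧
    (∀ p : L ⊕ (T × ℤ),
        bigExtMap φ σ p = p ↔ ∃ b : L, p = Sum.inl b ∧ φ b = b) := by
  refine ⟨⟨?_, ?_⟩, ?_, fun b => rfl, ?_⟩
  · intro p q h
    cases p with
    | inl b => cases q with
      | inl c => simpa [bigExtMap, φ.injective.eq_iff] using h
      | inr q => simp [bigExtMap] at h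
    | inr p => cases q with
      | inl c => simp [bigExtMap] at h
      | inr q =>
        simp only [bigExtMap, Sum.inr.injEq, Prod.mk.injEq] at h
        obtain ⟨h1, h2⟩ := h
        exact congrArg Sum.inr (Prod.ext (σ.injective h1) (by omega))
  · intro q
    cases q with
    | inl c => exact ⟨Sum.inl (φ.symm c), by simp [bigExtMap]⟩
    | inr q => exact ⟨Sum.inr (σ.symm q.1, q.2 - 1), by simp [bigExtMap]⟩
  · intro p q
    cases p with
    | inl b => cases q with
      | inl c => simp [bigExtLt, bigExtMap]
      | inr q => simp [bigExtLt, bigExtMap, ha, φ.le_iff_le]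
    | inr p => cases q with
      | inl c => simp [bigExtLt, bigExtMap, ha, φ.lt_iff_lt]
      | inr q =>
        simp [bigExtLt, bigExtMap, ha, φ.lt_iff_lt, φ.injective.eq_iff,
          σ.lt_iff_lt, σ.injective.eq_iff]
  · intro p
    cases p with
    | inl b => simp [bigExtMap]
    | inr p =>
      simp only [bigExtMap]
      constructor
      · intro h
        rw [Sum.inr.injEq, Prod.ext_iff] at h
        omega
      · rintro ⟨b, h, -⟩; simp at h
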